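/- The group ⟨W_k P_3 W_k†⟩ ∩ P_3, for W_k the Toffoli gate composed with diag(1, e^{iπ/2^{k-1}}) on qubit 3 (k ≥ 3), does not contain any maximal abelian subgroup of the 3-qubit Pauli group P_3; hence W_k is not a semi-Clifford operation. -/

import Mathlib

open Matrix Complex

/-- Index type for `n`-qubit computational basis states. -/
abbrev Q (n : ℕ) := Fin n → Fin 2

/-- The four single-qubit Pauli matrices I, X, Y, Z. -/
noncomputable def pauli1 : Fin 4 → Matrix (Fin 2) (Fin 2) ℂ :=
  ![1, !![0, 1; 1, 0], !![0, -Complex.I; Complex.I, 0], !![1, 0; 0, -1]]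

/-- The tensor product of `n` single-qubit operators. -/
noncomputable def tensorOp {n : ℕ} (f : Fin n → Matrix (Fin 2) (Fin 2) ℂ) :
    Matrix (Q n) (Q n) ℂ :=
  Matrix.of fun x y => ∏ i, f i (x i) (y i)

/-- The `n`-qubit Pauli group: tensor products of Pauli matrices with phases ±1, ±i. -/
noncomputable def PauliGroup (n : ℕ) : Set (Matrix (Q n) (Q n) ℂ) :=
  { M | ∃ (s : Fin 4) (f : Fin n → Fin 4),
      M = Complex.I ^ (s : ℕ) • tensorOp fun i => pauli1 (f i) }

/-- The Clifford hierarchy: `Ck n 1` is the Pauli group and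
`Ck n (k+1) = {U unitary : U P U† ∈ Ck n k for all Paulis P}`. -/
noncomputable def Ck (n : ℕ) : ℕ → Set (Matrix (Q n) (Q n) ℂ)
  | 0 => PauliGroup n
  | 1 => PauliGroup n
  | (k + 2) => { U | U ∈ Matrix.unitaryGroup (Q n) ℂ ∧
      ∀ P ∈ PauliGroup n, U * P * Uᴴ ∈ Ck n (k + 1) }

/-- A subgroup of the `n`-qubit Pauli group (given as a set of matrices closed
under the group operations; inverses of Paulis are conjugate transposes). -/
noncomputable def IsPauliSubgroup (n : ℕ) (G : Set (Matrix (Q n) (Q n) ℂ)) : Prop :=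
  G ⊆ PauliGroup n ∧ (1 : Matrix (Q n) (Q n) ℂ) ∈ G ∧
    (∀ A ∈ G, ∀ B ∈ G, A * B ∈ G) ∧ (∀ A ∈ G, Aᴴ ∈ G)

/-- A maximal abelian subgroup of the `n`-qubit Pauli group. -/
noncomputable def IsMaxAbelian (n : ℕ) (G : Set (Matrix (Q n) (Q n) ℂ)) : Prop :=
  IsPauliSubgroup n G ∧ (∀ A ∈ G, ∀ B ∈ G, A * B = B * A) ∧
    ∀ G', IsPauliSubgroup n G' → (∀ A ∈ G', ∀ B ∈ G', A * B = B * A) →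
      G ⊆ G' → G' ⊆ G

/-- A semi-Clifford operation: a unitary sending by conjugation some maximal
abelian subgroup of the Pauli group onto another maximal abelian subgroup. -/
noncomputable def SemiClifford (n : ℕ) (R : Matrix (Q n) (Q n) ℂ) : Prop :=
  R ∈ Matrix.unitaryGroup (Q n) ℂ ∧
    ∃ G, IsMaxAbelian n G ∧ IsMaxAbelian n ((fun A => R * A * Rᴴ) '' G)

/-- The Toffoli gate as a permutation of three-qubit basis states
(controls on qubits 1,2, target on qubit 3). -/
def toffoliFun (v : Q 3) : Q 3 :=
  Function.update v 2 (if v 0 = 1 ∧ v 1 = 1 then v 2 + 1 else v 2)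

/-- The 8×8 Toffoli gate. -/
noncomputable def Toffoli : Matrix (Q 3) (Q 3) ℂ :=
  Matrix.of fun x y => if x = toffoliFun y then 1 else 0

/-- The Pauli `Z` acting on qubit `i` of three qubits. -/
noncomputable def Zon (i : Fin 3) : Matrix (Q 3) (Q 3) ℂ :=
  Matrix.of fun x y => if x = y then (if x i = 1 then -1 else 1) else 0

/-- The controlled-Z gate on qubits 1 and 2. -/
noncomputable def CZ12 : Matrix (Q 3) (Q 3) ℂ :=
  Matrix.of fun x y => if x = y then (if x 0 = 1 ∧ x 1 = 1 then -1 else 1) else 0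

/-- The phase gate `diag(1, e^{iπ/2^{k-1}})` acting on qubit 3. -/
noncomputable def Vph (k : ℕ) : Matrix (Q 3) (Q 3) ℂ :=
  Matrix.of fun x y => if x = y then
    (if x 2 = 1 then Complex.exp ((Real.pi : ℂ) * Complex.I / 2 ^ (k - 1)) else 1) else 0

/-- The gate `W_k`: Toffoli composed with the phase gate on qubit 3. -/
noncomputable def Wgate (k : ℕ) : Matrix (Q 3) (Q 3) ℂ := Toffoli * Vph k

/-! Conjugation by `W_k` permutes the computational basis by the Toffoli map and multiplies by
the phases `1` and `ω = e^{iπ/2^{k-1}}` according to the third bit. If a Pauli `P` flips the bits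
in a pattern `d ≠ 0`, some translation `u ↦ u + d` flips the third Toffoli output bit, so
`W_k† P W_k` has a nonzero entry whose fourth power is `ω^{±4} ≠ 1`, and it is not a Pauli.
Hence a maximal abelian subgroup inside `W_k P_3 W_k† ∩ P_3` consists of diagonal Paulis, so by
maximality it is the whole diagonal Pauli group and contains `Z_3`; but
`W_k† Z_3 W_k = Z_3 · CZ₁₂` is not a Pauli. -/

open Real

theorem Matrix.IsDiag.mul {ι α : Type*} [Fintype ι] [DecidableEq ι] [NonUnitalNonAssocSemiring α]
    {A B : Matrix ι ι α} (hA : A.IsDiag) (hB : B.IsDiag) : (A * B).IsDiag := by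
  rw [← hA.diagonal_diag, ← hB.diagonal_diag, diagonal_mul_diagonal]
  exact isDiag_diagonal _

theorem Matrix.IsDiag.commute {ι α : Type*} [Fintype ι] [DecidableEq ι] [CommSemiring α]
    {A B : Matrix ι ι α} (hA : A.IsDiag) (hB : B.IsDiag) : Commute A B := by
  rw [← hA.diagonal_diag, ← hB.diagonal_diag]
  exact commute_diagonal _ _

def xBit : Fin 4 → Fin 2 := ![0, 1, 1, 0]

lemma pauli1_apply_eq_zero {c : Fin 4} {a b : Fin 2} (h : b ≠ a + xBit c) : pauli1 c a b = 0 := by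
  fin_cases c <;> fin_cases a <;> fin_cases b <;> simp_all [pauli1, xBit]

lemma pauli1_apply_add_xBit_pow_four (c : Fin 4) (a : Fin 2) : pauli1 c a (a + xBit c) ^ 4 = 1 := by
  fin_cases c <;> fin_cases a <;> simp [pauli1, xBit, Even.neg_pow (by decide : Even 4)]

lemma pauli1_conjTranspose (c : Fin 4) : (pauli1 c)ᴴ = pauli1 c := by
  fin_cases c <;> ext a b <;> fin_cases a <;> fin_cases b <;> simp [pauli1]

def pauli1MulPhase : Fin 4 → Fin 4 → Fin 4 :=
  ![![0, 0, 0, 0], ![0, 0, 1, 3], ![0, 3, 0, 1], ![0, 1, 3, 0]]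

lemma pauli1_mul_pauli1 (a b : Fin 4) :
    pauli1 a * pauli1 b = I ^ (pauli1MulPhase a b : ℕ) • pauli1 (a ^^^ b) := by
  fin_cases a <;> fin_cases b <;> ext i j <;> fin_cases i <;> fin_cases j <;>
    simp [pauli1, pauli1MulPhase, Matrix.mul_apply, Fin.sum_univ_two]

section TensorOp

variable {n : ℕ}

lemma tensorOp_mul (f g : Fin n → Matrix (Fin 2) (Fin 2) ℂ) :
    tensorOp f * tensorOp g = tensorOp fun i => f i * g i := by
  ext x y
  simp only [tensorOp, mul_apply, of_apply, ← Finset.prod_mul_distrib]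
  exact (Fintype.prod_sum fun i j => f i (x i) j * g i j (y i)).symm

lemma tensorOp_smul (c : Fin n → ℂ) (f : Fin n → Matrix (Fin 2) (Fin 2) ℂ) :
    (tensorOp fun i => c i • f i) = (∏ i, c i) • tensorOp f := by
  ext x y
  simp [tensorOp, Finset.prod_mul_distrib]

lemma tensorOp_conjTranspose (f : Fin n → Matrix (Fin 2) (Fin 2) ℂ) :
    (tensorOp f)ᴴ = tensorOp fun i => (f i)ᴴ := by
  ext x y
  simp [tensorOp]

lemma tensorOp_one : tensorOp (fun _ : Fin n => (1 : Matrix (Fin 2) (Fin 2) ℂ)) = 1 := by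
  ext x y
  by_cases h : x = y
  · subst h
    simp [tensorOp]
  · obtain ⟨i, hi⟩ := Function.ne_iff.mp h
    rw [one_apply_ne h]
    exact Finset.prod_eq_zero (Finset.mem_univ i) (one_apply_ne hi)

lemma tensorOp_pauli1_apply_eq_zero {f : Fin n → Fin 4} {x y : Q n} (h : y ≠ x + xBit ∘ f) :
    tensorOp (fun i => pauli1 (f i)) x y = 0 := by
  obtain ⟨i, hi⟩ := Function.ne_iff.mp h
  exact Finset.prod_eq_zero (Finset.mem_univ i) (pauli1_apply_eq_zero hi)

lemma tensorOp_pauli1_apply_pow_four (f : Fin n → Fin 4) (x : Q n) :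
    tensorOp (fun i => pauli1 (f i)) x (x + xBit ∘ f) ^ 4 = 1 := by
  simp only [tensorOp, of_apply, ← Finset.prod_pow]
  exact Finset.prod_eq_one fun i _ => pauli1_apply_add_xBit_pow_four (f i) (x i)

end TensorOp

section PauliGroup

variable {n : ℕ}

lemma mem_pauliGroup_iff {M : Matrix (Q n) (Q n) ℂ} :
    M ∈ PauliGroup n ↔ ∃ c ∈ Submonoid.powers I, ∃ f : Fin n → Fin 4,
      M = c • tensorOp fun i => pauli1 (f i) := by
  constructor
  · rintro ⟨s, f, rfl⟩
    exact ⟨_, ⟨s, rfl⟩, f, rfl⟩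
  · rintro ⟨_, ⟨m, rfl⟩, f, rfl⟩
    exact ⟨⟨m % 4, Nat.mod_lt m (by norm_num)⟩, f, by dsimp only; rw [I_pow_eq_pow_mod m]⟩

lemma one_mem_pauliGroup : (1 : Matrix (Q n) (Q n) ℂ) ∈ PauliGroup n :=
  ⟨0, 0, by simp [pauli1, tensorOp_one]⟩

lemma mul_mem_pauliGroup {A B : Matrix (Q n) (Q n) ℂ} (hA : A ∈ PauliGroup n)
    (hB : B ∈ PauliGroup n) : A * B ∈ PauliGroup n := by
  obtain ⟨c, hc, f, rfl⟩ := mem_pauliGroup_iff.mp hA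
  obtain ⟨d, hd, g, rfl⟩ := mem_pauliGroup_iff.mp hB
  refine mem_pauliGroup_iff.mpr
    ⟨c * d * ∏ i, I ^ (pauli1MulPhase (f i) (g i) : ℕ), ?_, fun i => f i ^^^ g i, ?_⟩
  · exact mul_mem (mul_mem hc hd) (prod_mem fun i _ => pow_mem (Submonoid.mem_powers I) _)
  · simp_rw [smul_mul_smul_comm, tensorOp_mul, pauli1_mul_pauli1, tensorOp_smul, smul_smul]

lemma conjTranspose_mem_pauliGroup {A : Matrix (Q n) (Q n) ℂ} (hA : A ∈ PauliGroup n) :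
    Aᴴ ∈ PauliGroup n := by
  obtain ⟨c, ⟨m, rfl⟩, f, rfl⟩ := mem_pauliGroup_iff.mp hA
  refine mem_pauliGroup_iff.mpr ⟨(I ^ 3) ^ m, ⟨3 * m, pow_mul I 3 m⟩, f, ?_⟩
  simp_rw [conjTranspose_smul, tensorOp_conjTranspose, pauli1_conjTranspose, star_pow,
    Complex.star_def, conj_I, I_pow_three]

lemma exists_support_of_mem_pauliGroup {M : Matrix (Q n) (Q n) ℂ} (hM : M ∈ PauliGroup n) :
    ∃ d : Q n, (∀ x y, y ≠ x + d → M x y = 0) ∧ ∀ x, M x (x + d) ^ 4 = 1 := by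
  obtain ⟨s, f, rfl⟩ := hM
  refine ⟨xBit ∘ f, fun x y h => ?_, fun x => ?_⟩
  · simp [tensorOp_pauli1_apply_eq_zero h]
  · rw [Matrix.smul_apply, smul_eq_mul, mul_pow, tensorOp_pauli1_apply_pow_four, mul_one,
      ← pow_mul, mul_comm, pow_mul, I_pow_four, one_pow]

lemma apply_pow_four_of_mem_pauliGroup {M : Matrix (Q n) (Q n) ℂ} (hM : M ∈ PauliGroup n)
    {x y : Q n} (h : M x y ≠ 0) : M x y ^ 4 = 1 := by
  obtain ⟨d, hzero, hpow⟩ := exists_support_of_mem_pauliGroup hM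
  obtain rfl : y = x + d := by_contra fun hy => h (hzero x y hy)
  exact hpow x

lemma exists_ne_zero_apply_pow_four_of_not_isDiag {M : Matrix (Q n) (Q n) ℂ}
    (hM : M ∈ PauliGroup n) (hdiag : ¬ M.IsDiag) : ∃ d ≠ 0, ∀ x, M x (x + d) ^ 4 = 1 := by
  obtain ⟨d, hzero, hpow⟩ := exists_support_of_mem_pauliGroup hM
  refine ⟨d, ?_, hpow⟩
  rintro rfl
  exact hdiag fun x y hxy => hzero x y (by simpa using hxy.symm)

lemma apply_self_mul_apply_self_of_mem_pauliGroup {M : Matrix (Q n) (Q n) ℂ}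
    (hM : M ∈ PauliGroup n) {x y x' y' : Q n}
    (h : ∀ i, x' i = x i ∧ y' i = y i ∨ x' i = y i ∧ y' i = x i) :
    M x x * M y y = M x' x' * M y' y' := by
  obtain ⟨s, f, rfl⟩ := hM
  simp only [Matrix.smul_apply, smul_eq_mul, tensorOp, of_apply]
  have hprod : (∏ i, pauli1 (f i) (x i) (x i)) * ∏ i, pauli1 (f i) (y i) (y i) =
      (∏ i, pauli1 (f i) (x' i) (x' i)) * ∏ i, pauli1 (f i) (y' i) (y' i) := by
    simp_rw [← Finset.prod_mul_distrib]
    refine Finset.prod_congr rfl fun i _ => ?_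
    rcases h i with ⟨hx, hy⟩ | ⟨hx, hy⟩ <;> rw [hx, hy]
    exact mul_comm _ _
  linear_combination (I ^ (s : ℕ)) ^ 2 * hprod

def diagPauliGroup (n : ℕ) : Set (Matrix (Q n) (Q n) ℂ) := {M | M ∈ PauliGroup n ∧ M.IsDiag}

lemma isPauliSubgroup_diagPauliGroup : IsPauliSubgroup n (diagPauliGroup n) :=
  ⟨fun _ hM => hM.1, ⟨one_mem_pauliGroup, isDiag_one⟩,
    fun _ hA _ hB => ⟨mul_mem_pauliGroup hA.1 hB.1, hA.2.mul hB.2⟩,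
    fun _ hA => ⟨conjTranspose_mem_pauliGroup hA.1, hA.2.conjTranspose⟩⟩

lemma diagPauliGroup_subset_of_isMaxAbelian {G : Set (Matrix (Q n) (Q n) ℂ)}
    (hG : IsMaxAbelian n G) (hdiag : ∀ A ∈ G, A.IsDiag) : diagPauliGroup n ⊆ G :=
  hG.2.2 _ isPauliSubgroup_diagPauliGroup (fun _ hA _ hB => hA.2.commute hB.2)
    fun A hA => ⟨hG.1.1 hA, hdiag A hA⟩

end PauliGroup

lemma conj_mem_of_mem_image_conj {ι : Type*} [Fintype ι] [DecidableEq ι] {U : Matrix ι ι ℂ}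
    (hU : U ∈ unitaryGroup ι ℂ) {S : Set (Matrix ι ι ℂ)} {A : Matrix ι ι ℂ}
    (hA : A ∈ (fun B => U * B * Uᴴ) '' S) : Uᴴ * A * U ∈ S := by
  obtain ⟨B, hB, rfl⟩ := hA
  have hUU : Uᴴ * U = 1 := by rw [← star_eq_conjTranspose]; exact mem_unitaryGroup_iff'.mp hU
  simpa only [Matrix.mul_assoc, hUU, Matrix.mul_one, ← Matrix.mul_assoc Uᴴ U, Matrix.one_mul]
    using hB

section Gate

lemma toffoliFun_involutive : Function.Involutive toffoliFun := by
  unfold Function.Involutive; decide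

def toffoliPerm : Equiv.Perm (Q 3) := toffoliFun_involutive.toPerm _

lemma eq_toffoliFun_iff {x y : Q 3} : x = toffoliFun y ↔ y = toffoliFun x := by
  rw [eq_comm, toffoliFun_involutive.eq_iff]

lemma Toffoli_eq_toMatrix : Toffoli = toffoliPerm.toPEquiv.toMatrix := by
  ext x y
  simp [Toffoli, PEquiv.toMatrix_apply, toffoliPerm, toffoliFun_involutive.eq_iff]

lemma Toffoli_conjTranspose : Toffoliᴴ = Toffoli := by
  ext x y
  simp [Toffoli, eq_toffoliFun_iff]

lemma Toffoli_conj (A : Matrix (Q 3) (Q 3) ℂ) :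
    Toffoliᴴ * A * Toffoli = A.submatrix toffoliPerm toffoliPerm := by
  rw [Toffoli_conjTranspose, Toffoli_eq_toMatrix, PEquiv.toMatrix_toPEquiv_mul,
    PEquiv.mul_toMatrix_toPEquiv, submatrix_submatrix, toffoliPerm,
    Function.Involutive.toPerm_symm]
  rfl

noncomputable def vphDiag (k : ℕ) (x : Q 3) : ℂ :=
  if x 2 = 1 then exp ((π : ℂ) * I / 2 ^ (k - 1)) else 1

lemma star_vphDiag_mul_self (k : ℕ) (x : Q 3) : star (vphDiag k x) * vphDiag k x = 1 := by
  unfold vphDiag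
  split_ifs
  · rw [Complex.star_def, ← exp_conj, ← Complex.exp_add]
    convert Complex.exp_zero
    simp [map_ofNat]
    ring
  · simp

lemma Wgate_conj (k : ℕ) (A : Matrix (Q 3) (Q 3) ℂ) :
    (Wgate k)ᴴ * A * Wgate k =
      diagonal (star (vphDiag k)) * A.submatrix toffoliPerm toffoliPerm * diagonal (vphDiag k) := by
  rw [← Toffoli_conj, Wgate, show Vph k = diagonal (vphDiag k) from rfl, conjTranspose_mul,
    diagonal_conjTranspose]
  simp only [Matrix.mul_assoc]

lemma Wgate_conj_apply (k : ℕ) (A : Matrix (Q 3) (Q 3) ℂ) (x y : Q 3) :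
    ((Wgate k)ᴴ * A * Wgate k) x y =
      star (vphDiag k x) * A (toffoliFun x) (toffoliFun y) * vphDiag k y := by
  rw [Wgate_conj, mul_diagonal, diagonal_mul]
  rfl

lemma Wgate_mem_unitaryGroup (k : ℕ) : Wgate k ∈ unitaryGroup (Q 3) ℂ := by
  have h := Wgate_conj k 1
  rw [Matrix.mul_one, submatrix_one_equiv, Matrix.mul_one, diagonal_mul_diagonal] at h
  rw [mem_unitaryGroup_iff', star_eq_conjTranspose, h, ← diagonal_one]
  exact congrArg diagonal (funext (star_vphDiag_mul_self k))

lemma exp_pi_I_div_pow_pow_four_ne_one {k : ℕ} (hk : 3 ≤ k) :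
    exp ((π : ℂ) * I / 2 ^ (k - 1)) ^ 4 ≠ 1 := by
  have hprim : IsPrimitiveRoot (exp ((π : ℂ) * I / 2 ^ (k - 1))) (2 ^ k) := by
    convert isPrimitiveRoot_exp (2 ^ k) (by positivity) using 2
    obtain ⟨j, rfl⟩ : ∃ j, k = j + 1 := ⟨k - 1, by omega⟩
    push_cast
    field_simp
    ring
  rw [Ne, hprim.pow_eq_one_iff_dvd]
  intro h
  have h8 : 2 ^ 3 ≤ 2 ^ k := Nat.pow_le_pow_right (by norm_num) hk
  have h4 := Nat.le_of_dvd (by norm_num) h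
  omega

lemma star_vphDiag_pow_four_mul_ne_one {k : ℕ} (hk : 3 ≤ k) {x y : Q 3} (h : x 2 ≠ y 2) :
    star (vphDiag k x) ^ 4 * vphDiag k y ^ 4 ≠ 1 := by
  have hω := exp_pi_I_div_pow_pow_four_ne_one hk
  unfold vphDiag
  by_cases hx : x 2 = 1
  · have hy : y 2 ≠ 1 := hx ▸ h.symm
    rw [if_pos hx, if_neg hy, one_pow, mul_one, ← star_pow, Ne, star_eq_iff_star_eq, star_one]
    exact hω.symm
  · have hy : y 2 = 1 := by omega
    simpa [hx, hy] using hω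

-- The third output bit `u₂ + u₀u₁` is not invariant under any nonzero translation of `u`.
lemma exists_toffoliFun_two_ne {d : Q 3} (hd : d ≠ 0) :
    ∃ u, toffoliFun u 2 ≠ toffoliFun (u + d) 2 := by
  revert d
  decide

lemma isDiag_of_Wgate_conj_mem {k : ℕ} (hk : 3 ≤ k) {P : Matrix (Q 3) (Q 3) ℂ}
    (hP : P ∈ PauliGroup 3) (hWP : (Wgate k)ᴴ * P * Wgate k ∈ PauliGroup 3) : P.IsDiag := by
  by_contra hdiag
  obtain ⟨d, hd, hPd⟩ := exists_ne_zero_apply_pow_four_of_not_isDiag hP hdiag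
  obtain ⟨u, hu⟩ := exists_toffoliFun_two_ne hd
  have hentry := Wgate_conj_apply k P (toffoliFun u) (toffoliFun (u + d))
  rw [toffoliFun_involutive, toffoliFun_involutive] at hentry
  have hne : ((Wgate k)ᴴ * P * Wgate k) (toffoliFun u) (toffoliFun (u + d)) ≠ 0 := by
    rw [hentry]
    refine mul_ne_zero (mul_ne_zero ?_ ?_) ?_
    · exact left_ne_zero_of_mul_eq_one (star_vphDiag_mul_self k _)
    · exact fun h0 => by simpa [h0] using hPd u
    · exact right_ne_zero_of_mul_eq_one (star_vphDiag_mul_self k _)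
  have h4 := apply_pow_four_of_mem_pauliGroup hWP hne
  rw [hentry, mul_pow, mul_pow, hPd, mul_one] at h4
  exact star_vphDiag_pow_four_mul_ne_one hk hu h4

lemma Zon_two_mem_pauliGroup : Zon 2 ∈ PauliGroup 3 := by
  refine ⟨0, ![0, 0, 3], ?_⟩
  ext x y
  by_cases h : x = y
  · subst h
    simp only [Zon, tensorOp, of_apply, Fin.prod_univ_three]
    rcases (by decide : ∀ a : Fin 2, a = 0 ∨ a = 1) (x 2) with ha | ha <;> simp [pauli1, ha]
  · have hxBit : (xBit ∘ ![0, 0, 3] : Q 3) = 0 := by decide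
    rw [Matrix.smul_apply, tensorOp_pauli1_apply_eq_zero (by rwa [hxBit, add_zero, ne_comm])]
    simp [Zon, h]

lemma toffoliFun_two_eq_one_iff (x : Q 3) :
    toffoliFun x 2 = 1 ↔ ¬(x 2 = 1 ↔ x 0 = 1 ∧ x 1 = 1) := by
  revert x
  decide

lemma Wgate_conj_Zon_two (k : ℕ) : (Wgate k)ᴴ * Zon 2 * Wgate k = Zon 2 * CZ12 := by
  rw [Wgate_conj, show Zon 2 = diagonal fun x => if x 2 = 1 then -1 else 1 from rfl,
    show CZ12 = diagonal fun x => if x 0 = 1 ∧ x 1 = 1 then -1 else 1 from rfl,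
    submatrix_diagonal_equiv, diagonal_mul_diagonal, diagonal_mul_diagonal, diagonal_mul_diagonal]
  congr 1
  funext x
  rw [Pi.star_apply, mul_right_comm, star_vphDiag_mul_self, one_mul]
  have := toffoliFun_two_eq_one_iff x
  simp only [Function.comp_apply, toffoliPerm, Function.Involutive.coe_toPerm]
  split_ifs <;> simp_all

-- The sign `(-1)^{x₀x₁}` does not factor over the qubits.
lemma Zon_two_mul_CZ12_not_mem_pauliGroup : Zon 2 * CZ12 ∉ PauliGroup 3 := by
  intro h
  have := apply_self_mul_apply_self_of_mem_pauliGroup h (x := ![0, 0, 0]) (y := ![1, 1, 0])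
    (x' := ![1, 0, 0]) (y' := ![0, 1, 0]) (by decide)
  have hdiag : Zon 2 * CZ12 = diagonal fun x =>
      (if x 2 = 1 then -1 else 1) * (if x 0 = 1 ∧ x 1 = 1 then -1 else 1) :=
    diagonal_mul_diagonal _ _
  rw [hdiag] at this
  norm_num [Matrix.cons_val_two, Matrix.tail_cons, Matrix.head_cons] at this

end Gate

lemma SemiClifford.exists_isMaxAbelian_subset {n : ℕ} {R : Matrix (Q n) (Q n) ℂ}
    (hR : SemiClifford n R) :
    ∃ G, IsMaxAbelian n G ∧ G ⊆ ((fun A => R * A * Rᴴ) '' PauliGroup n) ∩ PauliGroup n := by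
  obtain ⟨-, G, hG, hRG⟩ := hR
  refine ⟨_, hRG, ?_⟩
  rintro _ ⟨A, hA, rfl⟩
  exact ⟨⟨A, hG.1.1 hA, rfl⟩, hRG.1.1 ⟨A, hA, rfl⟩⟩

/-- for `k ≥ 3`, the intersection `(W_k P_3 W_k†) ∩ P_3` does
not contain any maximal abelian subgroup of the 3-qubit Pauli group; hence
`W_k` is not a semi-Clifford operation. -/
theorem Wgate_not_semiClifford (k : ℕ) (hk : 3 ≤ k) :
    (¬ ∃ G, IsMaxAbelian 3 G ∧
        G ⊆ ((fun A => Wgate k * A * (Wgate k)ᴴ) '' PauliGroup 3) ∩ PauliGroup 3) ∧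
    ¬ SemiClifford 3 (Wgate k) := by
  have hconj {A : Matrix (Q 3) (Q 3) ℂ}
      (hA : A ∈ (fun B => Wgate k * B * (Wgate k)ᴴ) '' PauliGroup 3) :
      (Wgate k)ᴴ * A * Wgate k ∈ PauliGroup 3 :=
    conj_mem_of_mem_image_conj (Wgate_mem_unitaryGroup k) hA
  have hnot : ¬ ∃ G, IsMaxAbelian 3 G ∧
      G ⊆ ((fun A => Wgate k * A * (Wgate k)ᴴ) '' PauliGroup 3) ∩ PauliGroup 3 := by
    rintro ⟨G, hG, hsub⟩
    have hdiag : ∀ A ∈ G, A.IsDiag := fun A hA =>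
      isDiag_of_Wgate_conj_mem hk (hsub hA).2 (hconj (hsub hA).1)
    have hZ : Zon 2 ∈ G := diagPauliGroup_subset_of_isMaxAbelian hG hdiag
      ⟨Zon_two_mem_pauliGroup, isDiag_diagonal _⟩
    apply Zon_two_mul_CZ12_not_mem_pauliGroup
    rw [← Wgate_conj_Zon_two k]
    exact hconj (hsub hZ).1
  exact ⟨hnot, fun hW => hnot hW.exists_isMaxAbelian_subset⟩
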